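/- arXiv:2012.01374 — 2 statements merged into one kernel-verified Lean document; each statement's English description precedes it below -/
import Mathlib

section
/- Let G be a finite non-abelian group, H a subgroup of G with H ≠ Z(H,G), and g ∈ K(H,G) with g ≠ 1 and g² = 1. If x ∈ G \ H and there exists h ∈ H with h⁻¹xh = xg, then the degree of x in Δ_{H,G}^g equals |H| - |Z(H,G)| - |C_H(x)|. -/
open SimpleGraph

/-- `Z(H,G)`: the set of elements of `H` commuting with every element of `G`. -/
def relCenter (G : Type*) [Group G] (H : Subgroup G) : Set G :=
  {x : G | x ∈ H ∧ ∀ y : G, x * y = y * x}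

/-- The commutator `[x,y] = x⁻¹y⁻¹xy`. -/
def comm' {G : Type*} [Group G] (x y : G) : G :=
  x⁻¹ * y⁻¹ * x * y

lemma comm'_swap {G : Type*} [Group G] (x y : G) :
    comm' y x = (comm' x y)⁻¹ := by
  simp only [comm', mul_inv_rev, inv_inv, mul_assoc]

/-- `K(H,G) = {[x,y] : x ∈ H, y ∈ G}`. -/
def relComm (G : Type*) [Group G] (H : Subgroup G) : Set G :=
  {w : G | ∃ x ∈ H, ∃ y : G, comm' x y = w}

/-- The graph `Δ_{H,G}^g`: vertices are the elements of `G \ Z(H,G)`, and two distinct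
vertices `x`, `y` are adjacent iff (`x ∈ H` or `y ∈ H`) and `[x,y] ≠ g, g⁻¹`. -/
def gnc (G : Type*) [Group G] (H : Subgroup G) (g : G) :
    SimpleGraph (((relCenter G H)ᶜ : Set G)) where
  Adj x y := x ≠ y ∧ ((x : G) ∈ H ∨ (y : G) ∈ H) ∧
    comm' (x : G) (y : G) ≠ g ∧ comm' (x : G) (y : G) ≠ g⁻¹
  symm := by
    constructor
    rintro x y ⟨hxy, hH, h1, h2⟩
    refine ⟨fun h => hxy h.symm, hH.symm, ?_, ?_⟩
    · rw [comm'_swap, ne_eq, inv_eq_iff_eq_inv]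
      exact h2
    · rw [comm'_swap, ne_eq, inv_eq_iff_eq_inv, inv_inv]
      exact h1
  loopless := by
    constructor
    rintro x ⟨h, -⟩
    exact h rfl

/-- `C_H(x) = {h ∈ H : hx = xh}`. -/
def cH {G : Type*} [Group G] (H : Subgroup G) (x : G) : Set G :=
  {h : G | h ∈ H ∧ h * x = x * h}

/-!
For `x ∉ H` the neighbours of `x` in `Δ_{H,G}^g` are the elements `y ∈ H \ Z(H,G)` with
`[x,y] ≠ g` (as `g⁻¹ = g`). Since `[x,y] = x⁻¹ · y⁻¹xy`, the elements `y ∈ H` with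
`[x,y] = g` are those conjugating `x` to `xg`; this set contains the given `h ∈ H`, hence is
the coset `C_H(x) h`, and it avoids `Z(H,G)` because central elements have trivial
commutators with `x`.
-/

section Commutator

variable {G : Type*} [Group G]

lemma comm'_eq_inv_mul_conj (x y : G) : comm' x y = x⁻¹ * (y⁻¹ * x * y) := by
  simp only [comm', mul_assoc]

lemma comm'_eq_iff_conj_eq {x y g : G} : comm' x y = g ↔ y⁻¹ * x * y = x * g := by
  rw [comm'_eq_inv_mul_conj, inv_mul_eq_iff_eq_mul]

lemma comm'_eq_one_of_commute {x y : G} (hxy : y * x = x * y) : comm' x y = 1 := by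
  rw [comm'_eq_inv_mul_conj, mul_assoc, ← hxy, inv_mul_cancel_left, inv_mul_cancel]

lemma mul_inv_commute_iff_conj_eq {x y h : G} :
    y * h⁻¹ * x = x * (y * h⁻¹) ↔ y⁻¹ * x * y = h⁻¹ * x * h := by
  constructor
  · intro e
    calc y⁻¹ * x * y = y⁻¹ * (x * (y * h⁻¹)) * h := by group
      _ = h⁻¹ * x * h := by rw [← e]; group
  · intro e
    calc y * h⁻¹ * x = y * (h⁻¹ * x * h) * h⁻¹ := by group
      _ = x * (y * h⁻¹) := by rw [← e]; group

end Commutator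

section Centralizer

variable {G : Type*} [Group G] (H : Subgroup G)

lemma setOf_comm'_eq_eq_image_cH {x g h : G} (hh : h ∈ H) (hxh : comm' x h = g) :
    {y | y ∈ H ∧ comm' x y = g} = (· * h) '' cH H x := by
  rw [Set.image_mul_right]
  ext y
  simp only [Set.mem_ofPred_eq, Set.mem_preimage, cH, H.mul_mem_cancel_right (H.inv_mem hh),
    mul_inv_commute_iff_conj_eq, comm'_eq_iff_conj_eq.1 hxh, comm'_eq_iff_conj_eq]

lemma setOf_comm'_eq_subset_diff_relCenter {x g : G} (hg : g ≠ 1) :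
    {y | y ∈ H ∧ comm' x y = g} ⊆ (H : Set G) \ relCenter G H := by
  rintro y ⟨hyH, hxy⟩
  exact ⟨hyH, fun hyZ => hg (hxy ▸ comm'_eq_one_of_commute (hyZ.2 x))⟩

end Centralizer

open scoped Classical in
lemma gnc_degree_of_notMem {G : Type*} [Group G] [Fintype G] (H : Subgroup G) (g : G)
    {x : G} (hxH : x ∉ H) :
    (gnc G H g).degree ⟨x, fun h => hxH h.1⟩
      = {y | y ∈ H ∧ y ∉ relCenter G H ∧ comm' x y ≠ g ∧ comm' x y ≠ g⁻¹}.ncard := by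
  rw [← SimpleGraph.card_neighborSet_eq_degree, ← Nat.card_eq_fintype_card,
    Nat.card_coe_set_eq, ← Set.ncard_image_of_injective _ Subtype.val_injective]
  congr 1
  ext y
  simp only [Set.mem_image, SimpleGraph.mem_neighborSet, gnc, Set.mem_ofPred_eq]
  constructor
  · rintro ⟨⟨y, hyZ⟩, ⟨-, hxy | hyH, hg, hg'⟩, rfl⟩
    · exact absurd hxy hxH
    · exact ⟨hyH, hyZ, hg, hg'⟩
  · rintro ⟨hyH, hyZ, hg, hg'⟩
    refine ⟨⟨y, hyZ⟩, ⟨?_, Or.inr hyH, hg, hg'⟩, rfl⟩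
    rintro ⟨⟩
    exact hxH hyH

open scoped Classical in
/-- degree of a vertex `x ∈ G \ H` when `g ≠ 1`, `g² = 1` and `x` is
conjugate to `xg` by an element of `H`. -/
theorem stmt5 {G : Type*} [Group G] [Fintype G]
    (H : Subgroup G)
    (g : G) (hg1 : g ≠ 1) (hg2 : g ^ 2 = 1)
    (x : G) (hxH : x ∉ H)
    (hconj : ∃ h ∈ H, h⁻¹ * x * h = x * g) :
    (gnc G H g).degree ⟨x, by exact fun h => hxH h.1⟩
      = Nat.card H - Nat.card (relCenter G H) - Nat.card (cH H x) := by
  obtain ⟨h, hhH, hhx⟩ := hconj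
  have hginv : g⁻¹ = g := inv_eq_of_mul_eq_one_left (pow_two g ▸ hg2)
  set T := {y | y ∈ H ∧ comm' x y = g} with hT_def
  have hneighbours : {y | y ∈ H ∧ y ∉ relCenter G H ∧ comm' x y ≠ g ∧ comm' x y ≠ g⁻¹}
      = ((H : Set G) \ relCenter G H) \ T := by
    ext y
    simp only [hginv, T, Set.mem_sdiff, Set.mem_ofPred_eq, SetLike.mem_coe]
    tauto
  have hT : T.ncard = Nat.card (cH H x) := by
    rw [hT_def, setOf_comm'_eq_eq_image_cH H hhH (comm'_eq_iff_conj_eq.2 hhx),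
      Set.ncard_image_of_injective _ (mul_left_injective h), Nat.card_coe_set_eq]
  rw [gnc_degree_of_notMem H g hxH, hneighbours,
    Set.ncard_sdiff (setOf_comm'_eq_subset_diff_relCenter H hg1),
    Set.ncard_sdiff (fun _ hz => hz.1), hT, ← Nat.card_coe_set_eq, ← Nat.card_coe_set_eq,
    SetLike.coe_sort_coe]
end

section
/- Let n ≥ 8 be even, G = D_{2n} the dihedral group of order 2n, and H = ⟨a^{n/2}, a^r b⟩ = {1, a^{n/2}, a^r b, a^{n/2+r} b} for some 0 ≤ r < n/2, and let g ∈ ⟨a²⟩. If g = 1 then the graph Δ_{H,G}^g is connected and its diameter equals 2; if g ≠ 1 then Δ_{H,G}^g is not connected. -/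
open SimpleGraph

/-- `H = ⟨a^(n/2), a^r b⟩` inside `D_{2n}`, with `a` the rotation and `b` a reflection. -/
def H13 (n r : ℕ) : Subgroup (DihedralGroup n) :=
  Subgroup.closure
    {(DihedralGroup.r 1 : DihedralGroup n) ^ (n / 2), (DihedralGroup.r 1 : DihedralGroup n) ^ r * DihedralGroup.sr 0}

/-!
For even `n`, write `c = n/2`. Then `Z(H,G) = {1, a^c}`, so the vertices are the reflections and
the rotations `a^i` with `2i ≠ 0`. For `g = 1`, a vertex is adjacent to a reflection `s ∈ H`
unless it centralizes `s`, i.e. lies in `{1, a^c, s, a^c s}`. Hence the two reflections of `H`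
are adjacent to every other vertex but not to each other, which gives diameter `2`.
For `g = a^{2m} ≠ 1`, the rotation `a^m` is a vertex outside `H` whose commutator with every
reflection is `g⁻¹`, so it is an isolated vertex.
-/

open DihedralGroup

namespace ZMod

variable {n : ℕ}

lemma natCast_half_add_self (hn : Even n) : ((n / 2 : ℕ) : ZMod n) + (n / 2 : ℕ) = 0 := by
  rw [← Nat.cast_add, ← two_mul, Nat.two_mul_div_two_of_even hn, natCast_self]

lemma add_self_eq_zero_iff_of_even [NeZero n] (hn : Even n) {i : ZMod n} :
    i + i = 0 ↔ i = 0 ∨ i = (n / 2 : ℕ) := by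
  refine ⟨fun h => ?_, ?_⟩
  · obtain ⟨t, ht⟩ : n ∣ i.val + i.val := by
      rw [← natCast_eq_zero_iff, Nat.cast_add, natCast_zmod_val, h]
    have hlt := val_lt i
    obtain ⟨m, rfl⟩ := hn
    have hval : i.val = 0 ∨ i.val = m := by
      rcases t with _ | _ | t
      · omega
      · omega
      · nlinarith
    rcases hval with h0 | hm
    · exact .inl ((val_eq_zero i).mp h0)
    · refine .inr ?_
      rw [← natCast_zmod_val i, hm]
      congr 1
      omega
  · rintro (rfl | rfl)
    · exact add_zero 0
    · exact natCast_half_add_self hn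

lemma natCast_half_ne_zero (hn : 2 ≤ n) : ((n / 2 : ℕ) : ZMod n) ≠ 0 := by
  rw [Ne, natCast_eq_zero_iff]
  exact fun h => absurd (Nat.le_of_dvd (by omega) h) (by omega)

lemma one_add_one_ne_zero (hn : 2 < n) : (1 : ZMod n) + 1 ≠ 0 := by
  rw [one_add_one_eq_two, ← Nat.cast_two, Ne, natCast_eq_zero_iff]
  exact fun h => absurd (Nat.le_of_dvd two_pos h) (by omega)

end ZMod

namespace DihedralGroup

variable {n : ℕ}

lemma comm'_r_sr (i j : ZMod n) : comm' (r i) (sr j) = r (-(i + i)) := by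
  simp only [comm', inv_r, inv_sr, r_mul_sr, sr_mul_r, sr_mul_sr, r.injEq]
  ring

lemma comm'_sr_sr (i j : ZMod n) : comm' (sr i) (sr j) = r ((j - i) + (j - i)) := by
  simp only [comm', inv_sr, sr_mul_sr, r_mul_sr, r.injEq]
  ring

lemma exists_eq_r_add_self_of_mem_zpowers {g : DihedralGroup n}
    (hg : g ∈ Subgroup.zpowers (r 1 ^ 2)) : ∃ m : ZMod n, g = r (m + m) := by
  obtain ⟨k, rfl⟩ := Subgroup.mem_zpowers_iff.mp hg
  refine ⟨k, ?_⟩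
  rw [← zpow_natCast, ← zpow_mul, r_one_zpow]
  push_cast
  ring_nf

lemma comm'_sr_eq_one_iff [NeZero n] (hn : Even n) (x : DihedralGroup n) (i : ZMod n) :
    comm' x (sr i) = 1 ↔
      x = r 0 ∨ x = r ((n / 2 : ℕ) : ZMod n) ∨
        x = sr i ∨ x = sr (i + ((n / 2 : ℕ) : ZMod n)) := by
  have hc := ZMod.natCast_half_add_self hn
  rcases x with j | j
  · simp only [comm'_r_sr, one_def, r.injEq, neg_eq_zero, ZMod.add_self_eq_zero_iff_of_even hn,
      reduceCtorEq, or_false]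
  · simp only [comm'_sr_sr, one_def, r.injEq, ZMod.add_self_eq_zero_iff_of_even hn, sr.injEq,
      reduceCtorEq, false_or, sub_eq_zero]
    constructor
    · rintro (h | h)
      · exact .inl h.symm
      · exact .inr (by linear_combination -h - hc)
    · rintro (h | h)
      · exact .inl h.symm
      · exact .inr (by linear_combination -h - hc)

end DihedralGroup

section gnc

variable {G : Type*} [Group G] {H : Subgroup G}

lemma gnc_one_adj_iff {x y : ((relCenter G H)ᶜ : Set G)} :
    (gnc G H 1).Adj x y ↔
      x ≠ y ∧ ((x : G) ∈ H ∨ (y : G) ∈ H) ∧ comm' (x : G) y ≠ 1 := by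
  simp only [gnc, inv_one, and_self]

lemma gnc_isIsolated_of_notMem {g : G} {x : ((relCenter G H)ᶜ : Set G)} (hx : (x : G) ∉ H)
    (hcomm : ∀ y : ((relCenter G H)ᶜ : Set G), (y : G) ∈ H →
      comm' (x : G) y = g ∨ comm' (x : G) y = g⁻¹) :
    (gnc G H g).IsIsolated x := by
  rintro y ⟨-, hH, hg, hg'⟩
  exact (hcomm y (hH.resolve_left hx)).elim hg hg'

end gnc

lemma SimpleGraph.connected_and_diam_eq_two_of_forall_adj_both {V : Type*} {G : SimpleGraph V}
    {u w v : V} (huw : u ≠ w) (hnadj : ¬ G.Adj u w) (hvu : v ≠ u) (hvw : v ≠ w)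
    (hadj : ∀ x, x ≠ u → x ≠ w → G.Adj x u ∧ G.Adj x w) :
    G.Connected ∧ G.diam = 2 := by
  have hu : ∀ x, x ≠ w → G.edist x u ≤ 1 := fun x hxw =>
    edist_le_one_iff_adj_or_eq.mpr (or_iff_not_imp_right.mpr fun hxu => (hadj x hxu hxw).1)
  have hw : ∀ x, x ≠ u → G.edist x w ≤ 1 := fun x hxu =>
    edist_le_one_iff_adj_or_eq.mpr (or_iff_not_imp_right.mpr fun hxw => (hadj x hxu hxw).2)
  have huw2 : G.edist u w = 2 :=
    edist_eq_two_iff.mpr ⟨huw, hnadj, v, (hadj v hvu hvw).1.symm, (hadj v hvu hvw).2.symm⟩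
  have hdiam : G.ediam = 2 := by
    refine le_antisymm (ediam_le_of_edist_le fun x y => ?_) (huw2 ▸ edist_le_ediam)
    by_cases hxy_w : x ≠ w ∧ y ≠ w
    · calc G.edist x y ≤ G.edist x u + G.edist u y := G.edist_triangle
        _ ≤ 1 + 1 := add_le_add (hu x hxy_w.1) (edist_comm ▸ hu y hxy_w.2)
        _ = 2 := one_add_one_eq_two
    by_cases hxy_u : x ≠ u ∧ y ≠ u
    · calc G.edist x y ≤ G.edist x w + G.edist w y := G.edist_triangle
        _ ≤ 1 + 1 := add_le_add (hw x hxy_u.1) (edist_comm ▸ hw y hxy_u.2)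
        _ = 2 := one_add_one_eq_two
    obtain ⟨rfl, rfl⟩ | ⟨rfl, rfl⟩ : (x = u ∧ y = w) ∨ (x = w ∧ y = u) := by grind
    · exact huw2.le
    · exact edist_comm ▸ huw2.le
  have : Nonempty V := ⟨u⟩
  exact ⟨connected_of_ediam_ne_top (by simp [hdiam]), by rw [diam, hdiam]; rfl⟩

section H13

variable {n : ℕ}

lemma mem_H13_iff (hn : Even n) (k : ℕ) (x : DihedralGroup n) :
    x ∈ H13 n k ↔ x = r 0 ∨ x = r ((n / 2 : ℕ) : ZMod n) ∨
      x = sr (-(k : ZMod n)) ∨ x = sr (((n / 2 : ℕ) : ZMod n) - (k : ZMod n)) := by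
  have hc := ZMod.natCast_half_add_self hn
  have hgen :
      r 1 ^ (n / 2) = r ((n / 2 : ℕ) : ZMod n) ∧ r 1 ^ k * sr 0 = sr (-(k : ZMod n)) := by
    simp only [r_one_pow, r_mul_sr, zero_sub, and_self]
  constructor
  · intro hx
    induction hx using Subgroup.closure_induction with
    | mem x hx =>
      rcases hx with rfl | rfl
      · exact .inr (.inl hgen.1)
      · exact .inr (.inr (.inl hgen.2))
    | one => exact .inl one_def
    | mul x y _ _ hx hy =>
      rcases hx with rfl | rfl | rfl | rfl <;> rcases hy with rfl | rfl | rfl | rfl <;>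
        simp only [r_mul_r, r_mul_sr, sr_mul_r, sr_mul_sr, r.injEq, sr.injEq, reduceCtorEq,
          false_or, or_false] <;>
        first
          | (left; ring1) | (right; ring1)
          | (left; linear_combination hc) | (left; linear_combination -hc)
          | (right; linear_combination hc) | (right; linear_combination -hc)
    | inv x _ hx =>
      rcases hx with rfl | rfl | rfl | rfl
      · exact .inl (by rw [inv_r, neg_zero])
      · exact .inr (.inl (by rw [inv_r, r.injEq]; linear_combination -hc))
      · exact .inr (.inr (.inl (inv_sr _)))
      · exact .inr (.inr (.inr (inv_sr _)))
  · have hrc : r ((n / 2 : ℕ) : ZMod n) ∈ H13 n k :=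
      hgen.1 ▸ Subgroup.subset_closure (.inl rfl)
    have hs : sr (-(k : ZMod n)) ∈ H13 n k := hgen.2 ▸ Subgroup.subset_closure (.inr rfl)
    rintro (rfl | rfl | rfl | rfl)
    · exact one_def ▸ one_mem _
    · exact hrc
    · exact hs
    · convert mul_mem hrc hs using 1
      rw [r_mul_sr, sr.injEq]
      linear_combination hc

lemma mem_relCenter_H13_iff (hn : 2 < n) (he : Even n) (k : ℕ) (x : DihedralGroup n) :
    x ∈ relCenter (DihedralGroup n) (H13 n k) ↔ x = r 0 ∨ x = r ((n / 2 : ℕ) : ZMod n) := by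
  have hc := ZMod.natCast_half_add_self he
  constructor
  · rintro ⟨hH, hcomm⟩
    rcases (mem_H13_iff he k x).mp hH with h | h | h | h
    · exact .inl h
    · exact .inr h
    all_goals
      have h1 := hcomm (r 1)
      rw [h, sr_mul_r, r_mul_sr, sr.injEq] at h1
      exact absurd (by linear_combination h1) (ZMod.one_add_one_ne_zero hn)
  · rintro (rfl | rfl)
    · refine ⟨(mem_H13_iff he k _).mpr (.inl rfl), fun y => ?_⟩
      rw [← one_def, one_mul, mul_one]
    · refine ⟨(mem_H13_iff he k _).mpr (.inr (.inl rfl)), ?_⟩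
      rintro (j | j)
      · rw [r_mul_r, r_mul_r, add_comm]
      · rw [r_mul_sr, sr_mul_r, sr.injEq]
        linear_combination -hc

lemma mem_compl_relCenter_H13_iff (hn : 2 < n) (he : Even n) (k : ℕ) (x : DihedralGroup n) :
    x ∈ (relCenter (DihedralGroup n) (H13 n k))ᶜ ↔
      x ≠ r 0 ∧ x ≠ r ((n / 2 : ℕ) : ZMod n) := by
  rw [Set.mem_compl_iff, mem_relCenter_H13_iff hn he, not_or]

lemma gnc_H13_one_adj_of_eq_sr (hn : 2 < n) (he : Even n) {k : ℕ}
    {x y : ((relCenter (DihedralGroup n) (H13 n k))ᶜ : Set (DihedralGroup n))} {i : ZMod n}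
    (hy : (y : DihedralGroup n) = sr i) (hyH : (y : DihedralGroup n) ∈ H13 n k)
    (hxi : (x : DihedralGroup n) ≠ sr i)
    (hxi' : (x : DihedralGroup n) ≠ sr (i + ((n / 2 : ℕ) : ZMod n))) :
    (gnc (DihedralGroup n) (H13 n k) 1).Adj x y := by
  have : NeZero n := ⟨by omega⟩
  obtain ⟨hx0, hxc⟩ := (mem_compl_relCenter_H13_iff hn he k x).mp x.2
  refine gnc_one_adj_iff.mpr ⟨fun h => hxi (h ▸ hy), .inr hyH, ?_⟩
  rw [hy, Ne, comm'_sr_eq_one_iff he]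
  tauto

lemma gnc_H13_one_connected_and_diam_eq_two (hn : 2 < n) (he : Even n) (k : ℕ) :
    (gnc (DihedralGroup n) (H13 n k) 1).Connected ∧
      (gnc (DihedralGroup n) (H13 n k) 1).diam = 2 := by
  have hc := ZMod.natCast_half_add_self he
  have h2 := ZMod.one_add_one_ne_zero hn
  have hvert := mem_compl_relCenter_H13_iff hn he k
  let u : ((relCenter (DihedralGroup n) (H13 n k))ᶜ : Set (DihedralGroup n)) :=
    ⟨sr (-k), (hvert _).mpr ⟨nofun, nofun⟩⟩
  let w : ((relCenter (DihedralGroup n) (H13 n k))ᶜ : Set (DihedralGroup n)) :=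
    ⟨sr ((n / 2 : ℕ) - k), (hvert _).mpr ⟨nofun, nofun⟩⟩
  let v : ((relCenter (DihedralGroup n) (H13 n k))ᶜ : Set (DihedralGroup n)) :=
    ⟨r 1, (hvert _).mpr ⟨fun h => h2 (by rw [r.inj h, add_zero]),
      fun h => h2 (by rw [r.inj h, hc])⟩⟩
  have huH : (u : DihedralGroup n) ∈ H13 n k :=
    (mem_H13_iff he k _).mpr (.inr (.inr (.inl rfl)))
  have hwH : (w : DihedralGroup n) ∈ H13 n k :=
    (mem_H13_iff he k _).mpr (.inr (.inr (.inr rfl)))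
  have huw : u ≠ w := fun h => by
    have h' : sr (-(k : ZMod n)) = sr (((n / 2 : ℕ) : ZMod n) - (k : ZMod n)) :=
      congrArg Subtype.val h
    rw [sr.injEq] at h'
    exact ZMod.natCast_half_ne_zero (n := n) (by omega) (by linear_combination -h')
  refine SimpleGraph.connected_and_diam_eq_two_of_forall_adj_both huw ?_ (v := v)
    (fun h => nomatch congrArg Subtype.val h) (fun h => nomatch congrArg Subtype.val h)
    fun x hxu hxw => ⟨?_, ?_⟩
  · refine fun h => (gnc_one_adj_iff.mp h).2.2 ?_
    change comm' (sr _) (sr _) = 1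
    rw [comm'_sr_sr, one_def, r.injEq]
    linear_combination hc
  · refine gnc_H13_one_adj_of_eq_sr hn he rfl huH (fun h => hxu (Subtype.ext h)) fun h => hxw ?_
    exact Subtype.ext (h.trans (congrArg sr (by ring)))
  · refine gnc_H13_one_adj_of_eq_sr hn he rfl hwH (fun h => hxw (Subtype.ext h)) fun h => hxu ?_
    exact Subtype.ext (h.trans (congrArg sr (by linear_combination hc)))

lemma gnc_H13_not_connected (hn : 2 < n) (he : Even n) (k : ℕ) {m : ZMod n}
    (hm : r (m + m) ≠ 1) : ¬ (gnc (DihedralGroup n) (H13 n k) (r (m + m))).Connected := by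
  have : NeZero n := ⟨by omega⟩
  have hm' : m ≠ 0 ∧ m ≠ (n / 2 : ℕ) := by
    rw [← not_or, ← ZMod.add_self_eq_zero_iff_of_even he, ← r.injEq, ← one_def]
    exact hm
  have hvert := mem_compl_relCenter_H13_iff hn he k
  let x : ((relCenter (DihedralGroup n) (H13 n k))ᶜ : Set (DihedralGroup n)) :=
    ⟨r m, (hvert _).mpr ⟨fun h => hm'.1 (r.inj h), fun h => hm'.2 (r.inj h)⟩⟩
  let y : ((relCenter (DihedralGroup n) (H13 n k))ᶜ : Set (DihedralGroup n)) :=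
    ⟨sr 0, (hvert _).mpr ⟨nofun, nofun⟩⟩
  have hxH : (x : DihedralGroup n) ∉ H13 n k := by
    change r m ∉ H13 n k
    simp only [mem_H13_iff he, r.injEq, hm'.1, hm'.2, reduceCtorEq, or_self, not_false_eq_true]
  have hiso : (gnc (DihedralGroup n) (H13 n k) (r (m + m))).IsIsolated x := by
    refine gnc_isIsolated_of_notMem hxH fun z hzH => .inr ?_
    obtain ⟨hz0, hzc⟩ := (hvert _).mp z.2
    rcases (mem_H13_iff he k _).mp hzH with h | h | h | h
    · exact absurd h hz0
    · exact absurd h hzc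
    all_goals rw [h, comm'_r_sr, inv_r]
  exact fun hconn => not_reachable_of_neighborSet_left_eq_empty (u := x) (v := y)
    (fun h => nomatch congrArg Subtype.val h)
    hiso.neighborSet_eq_empty (hconn.preconnected x y)

end H13

theorem stmt13_general (n : ℕ) (hn : 8 ≤ n) (hne : Even n) (r : ℕ)
    (g : DihedralGroup n)
    (hg : g ∈ Subgroup.zpowers ((DihedralGroup.r 1 : DihedralGroup n) ^ 2)) :
    (g = 1 → (gnc (DihedralGroup n) (H13 n r) g).Connected ∧
      (gnc (DihedralGroup n) (H13 n r) g).diam = 2) ∧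
    (g ≠ 1 → ¬ (gnc (DihedralGroup n) (H13 n r) g).Connected) := by
  obtain ⟨m, rfl⟩ := exists_eq_r_add_self_of_mem_zpowers hg
  exact ⟨fun h => h ▸ gnc_H13_one_connected_and_diam_eq_two (by omega) hne r,
    gnc_H13_not_connected (by omega) hne r⟩

/-- for even `n ≥ 8`, `G = D_{2n}`, `H = ⟨a^(n/2), a^r b⟩`
(`0 ≤ r < n/2`) and `g ∈ ⟨a²⟩`: if `g = 1` then `Δ_{H,G}^g` is connected with
diameter `2`; if `g ≠ 1` then it is not connected. -/
theorem stmt13 (n : ℕ) (hn : 8 ≤ n) (hne : Even n) (r : ℕ) (hr : r < n / 2)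
    (g : DihedralGroup n)
    (hg : g ∈ Subgroup.zpowers ((DihedralGroup.r 1 : DihedralGroup n) ^ 2)) :
    (g = 1 → (gnc (DihedralGroup n) (H13 n r) g).Connected ∧
      (gnc (DihedralGroup n) (H13 n r) g).diam = 2) ∧
    (g ≠ 1 → ¬ (gnc (DihedralGroup n) (H13 n r) g).Connected) :=
  stmt13_general n hn hne r g hg
end
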